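/- arXiv:1508.01592 — 3 statements merged into one kernel-verified Lean document; each statement's English description precedes it below -/
import Mathlib

section
/- Let κ : [0,∞) → [0,∞) be a continuous, concave, nondecreasing function with κ(r) > 0 for all r > 0 and κ(0) = 0. Let c₄, c₅ > 0 and let b₁ > 0 satisfy c₄·κ(c₅·t) ≤ c₅ for all t ∈ [0,b₁]. Define φ₁(t) = c₅·t and, recursively for n ≥ 1, φ_{n+1}(t) = c₄·∫₀^t κ(φ_n(s)) ds. Then for every n ≥ 1 and every t ∈ [0,b₁], 0 ≤ φ_{n+1}(t) ≤ φ_n(t); in particular, for each t ∈ [0,b₁] the sequence (φ_n(t))_{n≥1} is nonincreasing. -/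
open Set MeasureTheory

/-!
Write `T f (t) = c₄ ∫₀ᵗ κ(f s) ds` (`majorantStep κ c₄ f t`), so that `φ_{n+1} = T φ_n`.
Since `κ` is nondecreasing and nonnegative on `[0,∞)`, `T` is monotone on nonnegative functions
and maps them to nonnegative functions; hence once `φ₂ ≤ φ₁`, applying `T` repeatedly gives
`φ_{n+2} ≤ φ_{n+1}` for all `n`.
The first comparison `T φ₁ ≤ φ₁` is exactly the smallness condition `c₄ κ(c₅ t) ≤ c₅`,
integrated over `[0,t]`. Continuity of the iterates is carried along to keep the integrals
meaningful.
-/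

noncomputable def majorantStep (κ : ℝ → ℝ) (c : ℝ) (f : ℝ → ℝ) (t : ℝ) : ℝ :=
  c * ∫ s in (0 : ℝ)..t, κ (f s)

section majorantStep

variable {κ f g : ℝ → ℝ} {c b t M : ℝ}

theorem intervalIntegrable_comp_of_nonneg (hκ : ContinuousOn κ (Ici 0))
    (hf : ContinuousOn f (Icc 0 t)) (hf₀ : ∀ s ∈ Icc 0 t, 0 ≤ f s) (ht : 0 ≤ t) :
    IntervalIntegrable (fun s => κ (f s)) volume 0 t :=
  (hκ.comp hf hf₀).intervalIntegrable_of_Icc ht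

theorem continuousOn_majorantStep (hκ : ContinuousOn κ (Ici 0))
    (hf : ContinuousOn f (Icc 0 b)) (hf₀ : ∀ s ∈ Icc 0 b, 0 ≤ f s) :
    ContinuousOn (majorantStep κ c f) (Icc 0 b) := by
  have hprim :=
    intervalIntegral.continuousOn_primitive (μ := volume) (hκ.comp hf hf₀).integrableOn_Icc
  refine (continuousOn_const (c := c)).mul hprim |>.congr fun x hx => ?_
  simp only [majorantStep, intervalIntegral.integral_of_le hx.1, Function.comp_def,
    Pi.mul_apply]

theorem majorantStep_nonneg (hc : 0 ≤ c) (hκ₀ : ∀ r, 0 ≤ r → 0 ≤ κ r)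
    (hf₀ : ∀ s ∈ Icc 0 t, 0 ≤ f s) (ht : 0 ≤ t) :
    0 ≤ majorantStep κ c f t :=
  mul_nonneg hc <| intervalIntegral.integral_nonneg ht fun s hs => hκ₀ _ (hf₀ s hs)

theorem majorantStep_mono (hc : 0 ≤ c) (hκ : MonotoneOn κ (Ici 0))
    (hfi : IntervalIntegrable (fun s => κ (f s)) volume 0 t)
    (hgi : IntervalIntegrable (fun s => κ (g s)) volume 0 t)
    (hf₀ : ∀ s ∈ Icc 0 t, 0 ≤ f s) (hfg : ∀ s ∈ Icc 0 t, f s ≤ g s) (ht : 0 ≤ t) :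
    majorantStep κ c f t ≤ majorantStep κ c g t :=
  mul_le_mul_of_nonneg_left (intervalIntegral.integral_mono_on ht hfi hgi fun s hs =>
    hκ (hf₀ s hs) ((hf₀ s hs).trans (hfg s hs)) (hfg s hs)) hc

theorem majorantStep_le_mul (hfi : IntervalIntegrable (fun s => κ (f s)) volume 0 t)
    (hM : ∀ s ∈ Icc 0 t, c * κ (f s) ≤ M) (ht : 0 ≤ t) :
    majorantStep κ c f t ≤ M * t := by
  calc majorantStep κ c f t = ∫ s in (0 : ℝ)..t, c * κ (f s) :=
        (intervalIntegral.integral_const_mul c _).symm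
    _ ≤ ∫ _ in (0 : ℝ)..t, M :=
        intervalIntegral.integral_mono_on ht (hfi.const_mul c) intervalIntegrable_const hM
    _ = M * t := by simp [mul_comm]

theorem majorantStep_iterate_antitone (hc : 0 ≤ c) (hκcont : ContinuousOn κ (Ici 0))
    (hκmono : MonotoneOn κ (Ici 0)) (hκ₀ : ∀ r, 0 ≤ r → 0 ≤ κ r) {ψ : ℕ → ℝ → ℝ}
    (hψ : ∀ n, ψ (n + 1) = majorantStep κ c (ψ n))
    (hψ₀cont : ContinuousOn (ψ 0) (Icc 0 b)) (hψ₀ : ∀ t ∈ Icc 0 b, 0 ≤ ψ 0 t)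
    (hψ₁ : ∀ t ∈ Icc 0 b, ψ 1 t ≤ ψ 0 t) (n : ℕ) :
    ContinuousOn (ψ n) (Icc 0 b) ∧ ∀ t ∈ Icc 0 b, 0 ≤ ψ (n + 1) t ∧ ψ (n + 1) t ≤ ψ n t := by
  have restrict : ∀ t ∈ Icc 0 b, Icc 0 t ⊆ Icc 0 b := fun t ht => Icc_subset_Icc_right ht.2
  induction n with
  | zero =>
    refine ⟨hψ₀cont, fun t ht => ⟨?_, hψ₁ t ht⟩⟩
    rw [hψ]
    exact majorantStep_nonneg hc hκ₀ (fun s hs => hψ₀ s (restrict t ht hs)) ht.1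
  | succ n ih =>
    obtain ⟨hcont, hstep⟩ := ih
    have hnext₀ : ∀ t ∈ Icc 0 b, 0 ≤ ψ (n + 1) t := fun t ht => (hstep t ht).1
    have hcur₀ : ∀ t ∈ Icc 0 b, 0 ≤ ψ n t := fun t ht => (hstep t ht).1.trans (hstep t ht).2
    have hnext_cont : ContinuousOn (ψ (n + 1)) (Icc 0 b) := by
      rw [hψ]
      exact continuousOn_majorantStep hκcont hcont hcur₀
    refine ⟨hnext_cont, fun t ht => ⟨?_, ?_⟩⟩
    · rw [hψ]
      exact majorantStep_nonneg hc hκ₀ (fun s hs => hnext₀ s (restrict t ht hs)) ht.1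
    · rw [hψ (n + 1), congrFun (hψ n) t]
      exact majorantStep_mono hc hκmono
        (intervalIntegrable_comp_of_nonneg hκcont (hnext_cont.mono (restrict t ht))
          (fun s hs => hnext₀ s (restrict t ht hs)) ht.1)
        (intervalIntegrable_comp_of_nonneg hκcont (hcont.mono (restrict t ht))
          (fun s hs => hcur₀ s (restrict t ht hs)) ht.1)
        (fun s hs => hnext₀ s (restrict t ht hs)) (fun s hs => (hstep s (restrict t ht hs)).2)
        ht.1

end majorantStep

theorem majorant_sequence_decreasing_general
    (κ : ℝ → ℝ)
    (hκcont : ContinuousOn κ (Ici 0))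
    (hκmono : MonotoneOn κ (Ici 0))
    (hκnonneg : ∀ r : ℝ, 0 ≤ r → 0 ≤ κ r)
    (c₄ c₅ b₁ : ℝ) (hc₄ : 0 < c₄) (hc₅ : 0 < c₅)
    (hsmall : ∀ t ∈ Icc (0 : ℝ) b₁, c₄ * κ (c₅ * t) ≤ c₅)
    (φ : ℕ → ℝ → ℝ)
    (hφ₁ : ∀ t : ℝ, φ 1 t = c₅ * t)
    (hφrec : ∀ n : ℕ, 1 ≤ n → ∀ t : ℝ, φ (n + 1) t = c₄ * ∫ s in (0 : ℝ)..t, κ (φ n s)) :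
    ∀ n : ℕ, 1 ≤ n → ∀ t ∈ Icc (0 : ℝ) b₁, 0 ≤ φ (n + 1) t ∧ φ (n + 1) t ≤ φ n t := by
  have hφ₁fun : φ 1 = fun t => c₅ * t := funext hφ₁
  have hφstep : ∀ n, φ (n + 1 + 1) = majorantStep κ c₄ (φ (n + 1)) := fun n =>
    funext (hφrec (n + 1) n.succ_pos)
  have hφ₂ : ∀ t ∈ Icc 0 b₁, φ 2 t ≤ φ 1 t := by
    intro t ht
    rw [hφstep 0, hφ₁ t, hφ₁fun]
    refine majorantStep_le_mul ?_ (fun s hs => hsmall s (Icc_subset_Icc_right ht.2 hs)) ht.1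
    exact intervalIntegrable_comp_of_nonneg hκcont (continuous_const_mul c₅).continuousOn
      (fun s hs => mul_nonneg hc₅.le hs.1) ht.1
  intro n hn t ht
  obtain ⟨m, rfl⟩ := Nat.exists_eq_add_of_le' hn
  exact (majorantStep_iterate_antitone (ψ := fun k => φ (k + 1)) hc₄.le hκcont hκmono hκnonneg
    hφstep (by rw [hφ₁fun]; exact (continuous_const_mul c₅).continuousOn)
    (fun t ht => by rw [hφ₁]; exact mul_nonneg hc₅.le ht.1) hφ₂ m).2 t ht

/-- The majorant sequence `φ₁(t) = c₅ t`, `φ_{n+1}(t) = c₄ ∫₀ᵗ κ(φ_n(s)) ds` from the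
proof of Theorem 3.2 is nonnegative and nonincreasing in `n` on `[0,b₁]`, provided
`c₄ κ(c₅ t) ≤ c₅` on `[0,b₁]`. -/
theorem majorant_sequence_decreasing
    (κ : ℝ → ℝ)
    (hκcont : ContinuousOn κ (Ici 0))
    (hκconc : ConcaveOn ℝ (Ici 0) κ)
    (hκmono : MonotoneOn κ (Ici 0))
    (hκnonneg : ∀ r : ℝ, 0 ≤ r → 0 ≤ κ r)
    (hκpos : ∀ r : ℝ, 0 < r → 0 < κ r)
    (hκzero : κ 0 = 0)
    (c₄ c₅ b₁ : ℝ) (hc₄ : 0 < c₄) (hc₅ : 0 < c₅) (hb₁ : 0 < b₁)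
    (hsmall : ∀ t ∈ Icc (0 : ℝ) b₁, c₄ * κ (c₅ * t) ≤ c₅)
    (φ : ℕ → ℝ → ℝ)
    (hφ₁ : ∀ t : ℝ, φ 1 t = c₅ * t)
    (hφrec : ∀ n : ℕ, 1 ≤ n → ∀ t : ℝ, φ (n + 1) t = c₄ * ∫ s in (0 : ℝ)..t, κ (φ n s)) :
    ∀ n : ℕ, 1 ≤ n → ∀ t ∈ Icc (0 : ℝ) b₁, 0 ≤ φ (n + 1) t ∧ φ (n + 1) t ≤ φ n t :=
  majorant_sequence_decreasing_general κ hκcont hκmono hκnonneg c₄ c₅ b₁ hc₄ hc₅ hsmall φ hφ₁ hφrec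
end

section
/- Let κ : [0,∞) → [0,∞) be a continuous, concave, nondecreasing function with κ(r) > 0 for all r > 0 and κ(0) = 0. Let c₄, c₅ > 0 and let b₁ > 0 satisfy c₄·κ(c₅·t) ≤ c₅ for all t ∈ [0,b₁]. Define φ₁(t) = c₅·t and, recursively for n ≥ 1, φ_{n+1}(t) = c₄·∫₀^t κ(φ_n(s)) ds. Then the pointwise limit φ(t) = lim_{n→∞} φ_n(t) exists for every t ∈ [0,b₁] and satisfies the integral equation φ(t) = c₄·∫₀^t κ(φ(s)) ds for all t ∈ [0,b₁]. -/
open Set MeasureTheory Filter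

/-!
The map `T f (t) = c₄ ∫₀ᵗ κ(f s) ds` preserves the cone of continuous functions with
`0 ≤ f t ≤ c₅ t` on `[0, b₁]` (this is what the smallness condition `c₄ κ(c₅ t) ≤ c₅` buys) and
is monotone there because `κ` is. Since `T φ₁ ≤ φ₁`, the iterates `φ_{n+1} = T φ_n` decrease
pointwise to some `φ ≥ 0`, and dominated convergence, with the integrable majorant `κ(c₅ s)`
and the continuity of `κ`, lets `T` pass to the limit: `φ = T φ`.
-/

noncomputable def picardOp (κ : ℝ → ℝ) (c : ℝ) (f : ℝ → ℝ) (t : ℝ) : ℝ :=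
  c * ∫ s in (0 : ℝ)..t, κ (f s)

structure LinearlyBoundedOn (c b : ℝ) (f : ℝ → ℝ) : Prop where
  continuousOn : ContinuousOn f (Icc 0 b)
  nonneg : ∀ t ∈ Icc 0 b, 0 ≤ f t
  le_mul : ∀ t ∈ Icc 0 b, f t ≤ c * t

section

variable {κ : ℝ → ℝ} {c₄ c₅ b t : ℝ} {f g : ℝ → ℝ}

namespace LinearlyBoundedOn

theorem continuousOn_comp (hκ : ContinuousOn κ (Ici 0)) (hf : LinearlyBoundedOn c₅ b f) :
    ContinuousOn (fun s => κ (f s)) (Icc 0 b) :=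
  hκ.comp hf.continuousOn hf.nonneg

theorem intervalIntegrable_comp (hκ : ContinuousOn κ (Ici 0)) (hf : LinearlyBoundedOn c₅ b f)
    (ht : t ∈ Icc 0 b) : IntervalIntegrable (fun s => κ (f s)) volume 0 t :=
  ((hf.continuousOn_comp hκ).mono (Icc_subset_Icc_right ht.2)).intervalIntegrable_of_Icc ht.1

theorem comp_le (hκ : MonotoneOn κ (Ici 0)) (hf : LinearlyBoundedOn c₅ b f) (ht : t ∈ Icc 0 b) :
    κ (f t) ≤ κ (c₅ * t) :=
  hκ (hf.nonneg t ht) ((hf.nonneg t ht).trans (hf.le_mul t ht)) (hf.le_mul t ht)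

theorem picardOp (hκcont : ContinuousOn κ (Ici 0)) (hκmono : MonotoneOn κ (Ici 0))
    (hκnonneg : ∀ r : ℝ, 0 ≤ r → 0 ≤ κ r) (hc₄ : 0 ≤ c₄)
    (hsmall : ∀ t ∈ Icc (0 : ℝ) b, c₄ * κ (c₅ * t) ≤ c₅) (hf : LinearlyBoundedOn c₅ b f) :
    LinearlyBoundedOn c₅ b (picardOp κ c₄ f) where
  continuousOn := continuousOn_const.mul <|
    (intervalIntegral.continuousOn_primitive (hf.continuousOn_comp hκcont).integrableOn_Icc).congr
      fun _ ht => intervalIntegral.integral_of_le ht.1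
  nonneg t ht := mul_nonneg hc₄ <| intervalIntegral.integral_nonneg ht.1 fun s hs =>
    hκnonneg _ (hf.nonneg s (Icc_subset_Icc_right ht.2 hs))
  le_mul t ht := calc
    _ = ∫ s in (0 : ℝ)..t, c₄ * κ (f s) := (intervalIntegral.integral_const_mul _ _).symm
    _ ≤ ∫ _ in (0 : ℝ)..t, c₅ :=
      intervalIntegral.integral_mono_on ht.1 ((hf.intervalIntegrable_comp hκcont ht).const_mul c₄)
        intervalIntegrable_const fun s hs =>
          have hs' : s ∈ Icc 0 b := Icc_subset_Icc_right ht.2 hs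
          (mul_le_mul_of_nonneg_left (hf.comp_le hκmono hs') hc₄).trans (hsmall s hs')
    _ = c₅ * t := by simp [mul_comm]

end LinearlyBoundedOn

theorem picardOp_le_picardOp (hκcont : ContinuousOn κ (Ici 0)) (hκmono : MonotoneOn κ (Ici 0))
    (hc₄ : 0 ≤ c₄) (hf : LinearlyBoundedOn c₅ b f) (hg : LinearlyBoundedOn c₅ b g)
    (hfg : ∀ t ∈ Icc 0 b, f t ≤ g t) (ht : t ∈ Icc 0 b) :
    picardOp κ c₄ f t ≤ picardOp κ c₄ g t := by
  refine mul_le_mul_of_nonneg_left ?_ hc₄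
  refine intervalIntegral.integral_mono_on ht.1 (hf.intervalIntegrable_comp hκcont ht)
    (hg.intervalIntegrable_comp hκcont ht) fun s hs => ?_
  have hs' : s ∈ Icc 0 b := Icc_subset_Icc_right ht.2 hs
  exact hκmono (hf.nonneg s hs') (hg.nonneg s hs') (hfg s hs')

theorem tendsto_picardOp (hκcont : ContinuousOn κ (Ici 0)) (hκmono : MonotoneOn κ (Ici 0))
    (hκnonneg : ∀ r : ℝ, 0 ≤ r → 0 ≤ κ r) (hc₅ : 0 ≤ c₅) {F : ℕ → ℝ → ℝ}
    (hF : ∀ n, LinearlyBoundedOn c₅ b (F n))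
    (hlim : ∀ t ∈ Icc 0 b, Tendsto (fun n => F n t) atTop (nhds (f t))) (ht : t ∈ Icc 0 b) :
    Tendsto (fun n => picardOp κ c₄ (F n) t) atTop (nhds (picardOp κ c₄ f t)) := by
  have hsub : uIoc 0 t ⊆ Icc 0 b := by
    rw [uIoc_of_le ht.1]
    exact Ioc_subset_Icc_self.trans (Icc_subset_Icc_right ht.2)
  have hbound : IntervalIntegrable (fun s => κ (c₅ * s)) volume 0 t :=
    (hκcont.comp (continuousOn_const.mul continuousOn_id)
      fun s hs => mul_nonneg hc₅ hs.1).intervalIntegrable_of_Icc ht.1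
  refine (intervalIntegral.tendsto_integral_filter_of_dominated_convergence _
    (.of_forall fun n => ?_) (.of_forall fun n => .of_forall fun s hs => ?_) hbound
    (.of_forall fun s hs => ?_)).const_mul c₄
  · exact (((hF n).continuousOn_comp hκcont).mono hsub).aestronglyMeasurable measurableSet_uIoc
  · rw [Real.norm_of_nonneg (hκnonneg _ ((hF n).nonneg s (hsub hs)))]
    exact (hF n).comp_le hκmono (hsub hs)
  · have hF_nonneg : ∀ n, 0 ≤ F n s := fun n => (hF n).nonneg s (hsub hs)
    exact (hκcont _ (ge_of_tendsto' (hlim s (hsub hs)) hF_nonneg)).tendsto.comp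
      (tendsto_nhdsWithin_iff.2 ⟨hlim s (hsub hs), .of_forall hF_nonneg⟩)

theorem linearlyBoundedOn_iterate_picardOp (hκcont : ContinuousOn κ (Ici 0))
    (hκmono : MonotoneOn κ (Ici 0)) (hκnonneg : ∀ r : ℝ, 0 ≤ r → 0 ≤ κ r) (hc₄ : 0 ≤ c₄)
    (hc₅ : 0 ≤ c₅) (hsmall : ∀ t ∈ Icc (0 : ℝ) b, c₄ * κ (c₅ * t) ≤ c₅) (n : ℕ) :
    LinearlyBoundedOn c₅ b ((picardOp κ c₄)^[n] (c₅ * ·)) := by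
  induction n with
  | zero => exact ⟨(continuous_const_mul c₅).continuousOn, fun t ht => mul_nonneg hc₅ ht.1,
      fun _ _ => le_rfl⟩
  | succ n ih =>
    rw [Function.iterate_succ']
    exact ih.picardOp hκcont hκmono hκnonneg hc₄ hsmall

theorem iterate_succ_picardOp_le (hκcont : ContinuousOn κ (Ici 0))
    (hκmono : MonotoneOn κ (Ici 0)) (hκnonneg : ∀ r : ℝ, 0 ≤ r → 0 ≤ κ r) (hc₄ : 0 ≤ c₄)
    (hc₅ : 0 ≤ c₅) (hsmall : ∀ t ∈ Icc (0 : ℝ) b, c₄ * κ (c₅ * t) ≤ c₅) (n : ℕ)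
    (ht : t ∈ Icc 0 b) :
    (picardOp κ c₄)^[n + 1] (c₅ * ·) t ≤ (picardOp κ c₄)^[n] (c₅ * ·) t := by
  have hbdd := linearlyBoundedOn_iterate_picardOp hκcont hκmono hκnonneg hc₄ hc₅ hsmall
  induction n generalizing t with
  | zero => exact (hbdd 1).le_mul t ht
  | succ n ih =>
    simpa only [← Function.iterate_succ_apply' (picardOp κ c₄)] using
      picardOp_le_picardOp hκcont hκmono hc₄ (hbdd (n + 1)) (hbdd n) (fun _ hs => ih hs) ht

theorem exists_tendsto_iterate_picardOp (hκcont : ContinuousOn κ (Ici 0))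
    (hκmono : MonotoneOn κ (Ici 0)) (hκnonneg : ∀ r : ℝ, 0 ≤ r → 0 ≤ κ r) (hc₄ : 0 ≤ c₄)
    (hc₅ : 0 ≤ c₅) (hsmall : ∀ t ∈ Icc (0 : ℝ) b, c₄ * κ (c₅ * t) ≤ c₅) :
    ∃ φ : ℝ → ℝ,
      (∀ t ∈ Icc 0 b, Tendsto (fun n => (picardOp κ c₄)^[n] (c₅ * ·) t) atTop (nhds (φ t))) ∧
      ∀ t ∈ Icc 0 b, φ t = picardOp κ c₄ φ t := by
  set F : ℕ → ℝ → ℝ := fun n => (picardOp κ c₄)^[n] (c₅ * ·)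
  have hbdd := linearlyBoundedOn_iterate_picardOp hκcont hκmono hκnonneg hc₄ hc₅ hsmall
  have hlim : ∀ t ∈ Icc 0 b, Tendsto (fun n => F n t) atTop (nhds (⨅ n, F n t)) := fun t ht =>
    tendsto_atTop_ciInf
      (antitone_nat_of_succ_le fun n =>
        iterate_succ_picardOp_le hκcont hκmono hκnonneg hc₄ hc₅ hsmall n ht)
      ⟨0, forall_mem_range.2 fun n => (hbdd n).nonneg t ht⟩
  refine ⟨fun t => ⨅ n, F n t, hlim, fun t ht => tendsto_nhds_unique
    ((tendsto_add_atTop_iff_nat 1).2 (hlim t ht)) ?_⟩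
  simpa only [F, Function.iterate_succ_apply'] using
    tendsto_picardOp hκcont hκmono hκnonneg hc₅ hbdd hlim ht

end

theorem majorant_sequence_limit_general
    (κ : ℝ → ℝ)
    (hκcont : ContinuousOn κ (Ici 0))
    (hκmono : MonotoneOn κ (Ici 0))
    (hκnonneg : ∀ r : ℝ, 0 ≤ r → 0 ≤ κ r)
    (c₄ c₅ b₁ : ℝ) (hc₄ : 0 < c₄) (hc₅ : 0 < c₅)
    (hsmall : ∀ t ∈ Icc (0 : ℝ) b₁, c₄ * κ (c₅ * t) ≤ c₅)
    (φ : ℕ → ℝ → ℝ)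
    (hφ₁ : ∀ t : ℝ, φ 1 t = c₅ * t)
    (hφrec : ∀ n : ℕ, 1 ≤ n → ∀ t : ℝ, φ (n + 1) t = c₄ * ∫ s in (0 : ℝ)..t, κ (φ n s)) :
    ∃ φlim : ℝ → ℝ,
      (∀ t ∈ Icc (0 : ℝ) b₁, Tendsto (fun n : ℕ => φ n t) atTop (nhds (φlim t))) ∧
      (∀ t ∈ Icc (0 : ℝ) b₁, φlim t = c₄ * ∫ s in (0 : ℝ)..t, κ (φlim s)) := by
  have hφ : ∀ n : ℕ, φ (n + 1) = (picardOp κ c₄)^[n] (c₅ * ·) := by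
    intro n
    induction n with
    | zero => exact funext hφ₁
    | succ n ih =>
      rw [Function.iterate_succ_apply', ← ih]
      exact funext (hφrec (n + 1) (by omega))
  obtain ⟨φlim, hlim, hfix⟩ :=
    exists_tendsto_iterate_picardOp hκcont hκmono hκnonneg hc₄.le hc₅.le hsmall
  refine ⟨φlim, fun t ht => ?_, hfix⟩
  rw [← tendsto_add_atTop_iff_nat 1]
  simpa only [hφ] using hlim t ht

/-- The majorant sequence `φ₁(t) = c₅ t`, `φ_{n+1}(t) = c₄ ∫₀ᵗ κ(φ_n(s)) ds` from the
proof of Theorem 3.2 converges pointwise on `[0,b₁]` to a limit `φ` satisfying the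
integral equation `φ(t) = c₄ ∫₀ᵗ κ(φ(s)) ds`. -/
theorem majorant_sequence_limit
    (κ : ℝ → ℝ)
    (hκcont : ContinuousOn κ (Ici 0))
    (hκconc : ConcaveOn ℝ (Ici 0) κ)
    (hκmono : MonotoneOn κ (Ici 0))
    (hκnonneg : ∀ r : ℝ, 0 ≤ r → 0 ≤ κ r)
    (hκpos : ∀ r : ℝ, 0 < r → 0 < κ r)
    (hκzero : κ 0 = 0)
    (c₄ c₅ b₁ : ℝ) (hc₄ : 0 < c₄) (hc₅ : 0 < c₅) (hb₁ : 0 < b₁)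
    (hsmall : ∀ t ∈ Icc (0 : ℝ) b₁, c₄ * κ (c₅ * t) ≤ c₅)
    (φ : ℕ → ℝ → ℝ)
    (hφ₁ : ∀ t : ℝ, φ 1 t = c₅ * t)
    (hφrec : ∀ n : ℕ, 1 ≤ n → ∀ t : ℝ, φ (n + 1) t = c₄ * ∫ s in (0 : ℝ)..t, κ (φ n s)) :
    ∃ φlim : ℝ → ℝ,
      (∀ t ∈ Icc (0 : ℝ) b₁, Tendsto (fun n : ℕ => φ n t) atTop (nhds (φlim t))) ∧
      (∀ t ∈ Icc (0 : ℝ) b₁, φlim t = c₄ * ∫ s in (0 : ℝ)..t, κ (φlim s)) :=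
  majorant_sequence_limit_general κ hκcont hκmono hκnonneg c₄ c₅ b₁ hc₄ hc₅ hsmall φ hφ₁ hφrec
end

section
/- Let κ : [0,∞) → [0,∞) be a continuous, concave, nondecreasing function with κ(r) > 0 for all r > 0, κ(0) = 0, and satisfying the divergence condition ∫₀₊ ds/κ(s) = ∞ (i.e. for some, equivalently every, ε > 0, ∫_s^ε du/κ(u) → ∞ as s → 0⁺). Let c₄, c₅ > 0 and let b₁ > 0 satisfy c₄·κ(c₅·t) ≤ c₅ for all t ∈ [0,b₁]. Define φ₁(t) = c₅·t and, recursively for n ≥ 1, φ_{n+1}(t) = c₄·∫₀^t κ(φ_n(s)) ds. Then φ_n(t) → 0 as n → ∞ for every t ∈ [0,b₁]. -/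
open Set MeasureTheory Filter

/-!
The iterates decrease pointwise: `φ₂ ≤ φ₁` is the smallness condition `c₄ κ(c₅ t) ≤ c₅`, and the
map `f ↦ c₄ ∫₀ᵗ κ ∘ f` is monotone. Their limit `ψ` is therefore, by dominated convergence, a
continuous solution of `ψ(t) = c₄ ∫₀ᵗ κ(ψ(s)) ds`, and Osgood's argument forces `ψ = 0`: if
`ψ(t) > 0`, let `a < t` be the last zero of `ψ` before `t`; on `(a, t]` separation of variables
gives `∫_{ψ(s)}^{ψ(t)} du / κ(u) = c₄ (t - s)`, which stays bounded as `s → a⁺` although the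
divergence condition sends it to infinity.
-/

open Topology intervalIntegral

noncomputable def picardMap (κ : ℝ → ℝ) (c : ℝ) (f : ℝ → ℝ) (t : ℝ) : ℝ :=
  c * ∫ s in (0 : ℝ)..t, κ (f s)

theorem ContinuousOn.exists_mem_Ico_eq_forall_Ioc_ne {β : Type*} [TopologicalSpace β]
    [T1Space β] {u : ℝ → β} {a b : ℝ} {y : β} (hab : a ≤ b) (hu : ContinuousOn u (Icc a b))
    (ha : u a = y) (hb : u b ≠ y) : ∃ c ∈ Ico a b, u c = y ∧ ∀ x ∈ Ioc c b, u x ≠ y := by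
  set S := Icc a b ∩ u ⁻¹' {y}
  have hS : IsClosed S := hu.preimage_isClosed_of_isClosed isClosed_Icc isClosed_singleton
  have hSbdd : BddAbove S := ⟨b, fun x hx => hx.1.2⟩
  obtain ⟨hc, hcy⟩ : sSup S ∈ S := hS.csSup_mem ⟨a, ⟨le_rfl, hab⟩, ha⟩ hSbdd
  refine ⟨sSup S, ⟨hc.1, hc.2.lt_of_ne fun h => hb (h ▸ hcy)⟩, hcy, fun x hx hxy => ?_⟩
  exact (le_csSup hSbdd ⟨⟨hc.1.trans hx.1.le, hx.2⟩, hxy⟩).not_gt hx.1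

theorem ContinuousOn.tendsto_comp_of_mem {α β : Type*} [TopologicalSpace α]
    [TopologicalSpace β] {f : α → β} {s : Set α} (hf : ContinuousOn f s) (hs : IsClosed s)
    {x : ℕ → α} {y : α} (hx : ∀ n, x n ∈ s) (hxy : Tendsto x atTop (𝓝 y)) :
    Tendsto (fun n => f (x n)) atTop (𝓝 (f y)) :=
  (hf y (hs.mem_of_tendsto hxy (Eventually.of_forall hx))).tendsto.comp
    (tendsto_nhdsWithin_iff.2 ⟨hxy, Eventually.of_forall hx⟩)

theorem integral_one_div_comp_eq_of_hasDerivAt {κ u : ℝ → ℝ} {c s t : ℝ} (hst : s ≤ t)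
    (hu : ContinuousOn u (Icc s t)) (hκ : ContinuousOn κ (u '' Icc s t))
    (hκu : ∀ x ∈ Icc s t, κ (u x) ≠ 0) (hderiv : ∀ x ∈ Ioo s t, HasDerivAt u (c * κ (u x)) x) :
    ∫ y in u s..u t, 1 / κ y = c * (t - s) := by
  have hκ' : ContinuousOn (fun x => κ (u x)) (Icc s t) := hκ.comp hu (mapsTo_image u _)
  rw [← uIcc_of_le hst] at hu hκ hκ'
  rw [← integral_comp_mul_deriv'' (g := fun y => 1 / κ y) hu (f' := fun x => c * κ (u x)) ?_
    (continuousOn_const.mul hκ') (continuousOn_const.div hκ ?_)]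
  · rw [integral_congr (g := fun _ => c), intervalIntegral.integral_const, smul_eq_mul, mul_comm]
    intro x hx
    rw [uIcc_of_le hst] at hx
    simp only [Function.comp_apply]
    field_simp [hκu x hx]
  · intro x hx
    rw [min_eq_left hst, max_eq_right hst] at hx
    exact (hderiv x hx).hasDerivWithinAt
  · rintro _ ⟨x, hx, rfl⟩
    rw [uIcc_of_le hst] at hx
    exact hκu x hx

theorem continuousOn_picardMap {κ f : ℝ → ℝ} {c b : ℝ}
    (h : IntegrableOn (fun s => κ (f s)) (Icc 0 b)) : ContinuousOn (picardMap κ c f) (Icc 0 b) :=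
  ContinuousOn.congr (f := fun t => c * ∫ s in Ioc 0 t, κ (f s))
    (continuousOn_const.mul (continuousOn_primitive h)) fun t ht => by
      simp only [picardMap, integral_of_le ht.1]

theorem hasDerivAt_picardMap {κ f : ℝ → ℝ} {c b x : ℝ}
    (h : ContinuousOn (fun s => κ (f s)) (Icc 0 b)) (hx : x ∈ Ioo 0 b) :
    HasDerivAt (picardMap κ c f) (c * κ (f x)) x := by
  have hmem : Icc 0 b ∈ 𝓝 x := Icc_mem_nhds hx.1 hx.2
  refine (integral_hasDerivAt_right ?_ ?_ (h.continuousAt hmem)).const_mul c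
  · exact (h.mono (Icc_subset_Icc_right hx.2.le)).intervalIntegrable_of_Icc hx.1.le
  · exact ⟨_, hmem, h.aestronglyMeasurable measurableSet_Icc⟩

theorem eqOn_zero_of_eqOn_picardMap {κ u : ℝ → ℝ} {c b : ℝ}
    (hκcont : ContinuousOn κ (Ici 0)) (hκpos : ∀ r, 0 < r → 0 < κ r)
    (hκdiv : ∀ ε, 0 < ε → Tendsto (fun s => ∫ x in s..ε, 1 / κ x) (𝓝[>] 0) atTop)
    (hu : ContinuousOn u (Icc 0 b)) (hu₀ : ∀ t ∈ Icc 0 b, 0 ≤ u t)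
    (hueq : EqOn u (picardMap κ c u) (Icc 0 b)) : EqOn u 0 (Icc 0 b) := by
  intro t ht
  by_contra hne
  have hκu : ContinuousOn (fun s => κ (u s)) (Icc 0 b) := hκcont.comp hu hu₀
  have hu0 : u 0 = 0 := by simpa [picardMap] using hueq ⟨le_rfl, ht.1.trans ht.2⟩
  obtain ⟨a, ha, hua, hne'⟩ :=
    (hu.mono (Icc_subset_Icc_right ht.2)).exists_mem_Ico_eq_forall_Ioc_ne ht.1 hu0 hne
  have hsub : Ioc a t ⊆ Icc 0 b := fun x hx => ⟨ha.1.trans hx.1.le, hx.2.trans ht.2⟩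
  have hpos : ∀ x ∈ Ioc a t, 0 < u x := fun x hx => (hu₀ x (hsub hx)).lt_of_ne' (hne' x hx)
  have hsep : ∀ s ∈ Ioo a t, ∫ y in u s..u t, 1 / κ y = c * (t - s) := by
    intro s hs
    have hst : Icc s t ⊆ Ioc a t := Icc_subset_Ioc_iff hs.2.le |>.2 ⟨hs.1, le_rfl⟩
    refine integral_one_div_comp_eq_of_hasDerivAt hs.2.le (hu.mono (hst.trans hsub))
      (hκcont.mono ?_) (fun x hx => (hκpos _ (hpos x (hst hx))).ne') fun x hx => ?_
    · rintro _ ⟨x, hx, rfl⟩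
      exact hu₀ x (hsub (hst hx))
    · have hx' : x ∈ Ioo 0 b := ⟨ha.1.trans_lt (hs.1.trans hx.1), hx.2.trans_le ht.2⟩
      exact (hasDerivAt_picardMap hκu hx').congr_of_eventuallyEq
        (eventually_of_mem (Icc_mem_nhds hx'.1 hx'.2) hueq)
  have hIoo : Ioo a t ∈ 𝓝[>] a := Ioo_mem_nhdsGT ha.2
  have hu_tendsto : Tendsto u (𝓝[>] a) (𝓝[>] 0) := by
    refine tendsto_nhdsWithin_iff.2 ⟨?_, ?_⟩
    · simpa [hua] using (hu a ⟨ha.1, ha.2.le.trans ht.2⟩).tendsto.mono_left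
        (nhdsWithin_le_of_mem (mem_of_superset hIoo (Ioo_subset_Ioc_self.trans hsub)))
    · filter_upwards [hIoo] with x hx using hpos x (Ioo_subset_Ioc_self hx)
  refine not_tendsto_atTop_of_tendsto_nhds (a := c * (t - a)) ?_
    ((hκdiv (u t) (hpos t ⟨ha.2, le_rfl⟩)).comp hu_tendsto)
  refine (tendsto_nhdsWithin_of_tendsto_nhds
    ((tendsto_const_nhds.sub tendsto_id).const_mul c)).congr' ?_
  filter_upwards [hIoo] with s hs using (hsep s hs).symm

theorem continuousOn_picardMap_and_mem_Icc {κ f : ℝ → ℝ} {c M b : ℝ}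
    (hκcont : ContinuousOn κ (Ici 0)) (hκmono : MonotoneOn κ (Ici 0))
    (hκnonneg : ∀ r, 0 ≤ r → 0 ≤ κ r) (hc : 0 ≤ c) (hsmall : ∀ t ∈ Icc 0 b, c * κ (M * t) ≤ M)
    (hf : ContinuousOn f (Icc 0 b)) (hfb : ∀ t ∈ Icc 0 b, f t ∈ Icc 0 (M * t)) :
    ContinuousOn (picardMap κ c f) (Icc 0 b) ∧
      ∀ t ∈ Icc 0 b, picardMap κ c f t ∈ Icc 0 (M * t) := by
  have hκf : ContinuousOn (fun s => κ (f s)) (Icc 0 b) := hκcont.comp hf fun s hs => (hfb s hs).1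
  refine ⟨continuousOn_picardMap (hκf.integrableOn_Icc (μ := volume)), fun t ht => ?_⟩
  have hsub : Icc 0 t ⊆ Icc 0 b := Icc_subset_Icc_right ht.2
  constructor
  · exact mul_nonneg hc (integral_nonneg ht.1 fun s hs => hκnonneg _ (hfb s (hsub hs)).1)
  · have hκf' : IntervalIntegrable (fun s => κ (f s)) volume 0 t :=
      (hκf.mono hsub).intervalIntegrable_of_Icc ht.1
    calc picardMap κ c f t = ∫ s in 0..t, c * κ (f s) :=
          (intervalIntegral.integral_const_mul c _).symm
      _ ≤ ∫ _ in 0..t, M := by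
        refine integral_mono_on ht.1 (hκf'.const_mul c) intervalIntegrable_const fun s hs => ?_
        obtain ⟨hfs₀, hfs⟩ := hfb s (hsub hs)
        calc c * κ (f s) ≤ c * κ (M * s) :=
              mul_le_mul_of_nonneg_left (hκmono hfs₀ (hfs₀.trans hfs) hfs) hc
          _ ≤ M := hsmall s (hsub hs)
      _ = M * t := by simp [mul_comm]

theorem picardMap_le_picardMap {κ f g : ℝ → ℝ} {c t : ℝ}
    (hκcont : ContinuousOn κ (Ici 0)) (hκmono : MonotoneOn κ (Ici 0)) (hc : 0 ≤ c) (ht : 0 ≤ t)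
    (hf : ContinuousOn f (Icc 0 t)) (hg : ContinuousOn g (Icc 0 t))
    (hfg : ∀ s ∈ Icc 0 t, 0 ≤ f s ∧ f s ≤ g s) : picardMap κ c f t ≤ picardMap κ c g t := by
  have hf₀ : ∀ s ∈ Icc 0 t, 0 ≤ f s := fun s hs => (hfg s hs).1
  have hg₀ : ∀ s ∈ Icc 0 t, 0 ≤ g s := fun s hs => (hfg s hs).1.trans (hfg s hs).2
  refine mul_le_mul_of_nonneg_left (integral_mono_on ht ?_ ?_ fun s hs => ?_) hc
  · exact (hκcont.comp hf hf₀).intervalIntegrable_of_Icc ht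
  · exact (hκcont.comp hg hg₀).intervalIntegrable_of_Icc ht
  · exact hκmono (hf₀ s hs) (hg₀ s hs) (hfg s hs).2

theorem continuousOn_and_eqOn_picardMap_of_tendsto {κ ψ : ℝ → ℝ} {F : ℕ → ℝ → ℝ} {c b M : ℝ}
    (hκcont : ContinuousOn κ (Ici 0))
    (hF : ∀ n, ContinuousOn (F n) (Icc 0 b)) (hF₀ : ∀ n, ∀ s ∈ Icc 0 b, 0 ≤ F n s)
    (hbound : ∀ n, ∀ s ∈ Icc 0 b, ‖κ (F n s)‖ ≤ M)
    (hFsucc : ∀ n, F (n + 1) = picardMap κ c (F n))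
    (hψ : ∀ s ∈ Icc 0 b, Tendsto (fun n => F n s) atTop (𝓝 (ψ s))) :
    ContinuousOn ψ (Icc 0 b) ∧ EqOn ψ (picardMap κ c ψ) (Icc 0 b) := by
  have hκF : ∀ n, ContinuousOn (fun s => κ (F n s)) (Icc 0 b) := fun n =>
    hκcont.comp (hF n) (hF₀ n)
  have hκψ : ∀ s ∈ Icc 0 b, Tendsto (fun n => κ (F n s)) atTop (𝓝 (κ (ψ s))) := fun s hs =>
    hκcont.tendsto_comp_of_mem isClosed_Ici (fun n => hF₀ n s hs) (hψ s hs)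
  have hψeq : EqOn ψ (picardMap κ c ψ) (Icc 0 b) := by
    intro t ht
    have hsub : uIoc 0 t ⊆ Icc 0 b := by
      rw [uIoc_of_le ht.1]
      exact Ioc_subset_Icc_self.trans (Icc_subset_Icc_right ht.2)
    refine tendsto_nhds_unique ((hψ t ht).comp (tendsto_add_atTop_nat 1)) ?_
    simp only [Function.comp_def, hFsucc]
    refine (tendsto_integral_filter_of_dominated_convergence (fun _ => M)
      (Eventually.of_forall fun n => ((hκF n).mono hsub).aestronglyMeasurable measurableSet_uIoc)
      (Eventually.of_forall fun n => ae_of_all _ fun s hs => hbound n s (hsub hs))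
      intervalIntegrable_const (ae_of_all _ fun s hs => hκψ s (hsub hs))).const_mul c
  have hint : IntegrableOn (fun s => κ (ψ s)) (Icc 0 b) := by
    refine Integrable.mono' (integrableOn_const (C := M) measure_Icc_lt_top.ne) ?_ ?_
    · exact aestronglyMeasurable_of_tendsto_ae atTop
        (fun n => (hκF n).aestronglyMeasurable measurableSet_Icc)
        ((ae_restrict_iff' measurableSet_Icc).2 (ae_of_all _ hκψ))
    · exact (ae_restrict_iff' measurableSet_Icc).2 (ae_of_all _ fun s hs =>
        le_of_tendsto' (hκψ s hs).norm fun n => hbound n s hs)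
  exact ⟨(continuousOn_picardMap hint).congr hψeq, hψeq⟩

theorem continuousOn_picardMap_iterate_and_mem_Icc {κ : ℝ → ℝ} {c₄ c₅ b : ℝ} {F : ℕ → ℝ → ℝ}
    (hκcont : ContinuousOn κ (Ici 0)) (hκmono : MonotoneOn κ (Ici 0))
    (hκnonneg : ∀ r, 0 ≤ r → 0 ≤ κ r) (hc₄ : 0 ≤ c₄) (hc₅ : 0 ≤ c₅)
    (hsmall : ∀ t ∈ Icc 0 b, c₄ * κ (c₅ * t) ≤ c₅)
    (hF₀ : ∀ t, F 0 t = c₅ * t) (hFsucc : ∀ n, F (n + 1) = picardMap κ c₄ (F n)) (n : ℕ) :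
    ContinuousOn (F n) (Icc 0 b) ∧ ∀ t ∈ Icc 0 b, F n t ∈ Icc 0 (c₅ * t) := by
  induction n with
  | zero =>
    refine ⟨(continuousOn_const.mul continuousOn_id).congr fun t _ => hF₀ t, fun t ht => ?_⟩
    rw [hF₀]
    exact ⟨mul_nonneg hc₅ ht.1, le_rfl⟩
  | succ n ih =>
    rw [hFsucc]
    exact continuousOn_picardMap_and_mem_Icc hκcont hκmono hκnonneg hc₄ hsmall ih.1 ih.2

theorem tendsto_picardMap_iterate_zero {κ : ℝ → ℝ} {c₄ c₅ b : ℝ} {F : ℕ → ℝ → ℝ}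
    (hκcont : ContinuousOn κ (Ici 0)) (hκmono : MonotoneOn κ (Ici 0))
    (hκnonneg : ∀ r, 0 ≤ r → 0 ≤ κ r) (hκpos : ∀ r, 0 < r → 0 < κ r)
    (hκdiv : ∀ ε, 0 < ε → Tendsto (fun s => ∫ x in s..ε, 1 / κ x) (𝓝[>] 0) atTop)
    (hc₄ : 0 ≤ c₄) (hc₅ : 0 ≤ c₅) (hsmall : ∀ t ∈ Icc 0 b, c₄ * κ (c₅ * t) ≤ c₅)
    (hF₀ : ∀ t, F 0 t = c₅ * t) (hFsucc : ∀ n, F (n + 1) = picardMap κ c₄ (F n))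
    {t : ℝ} (ht : t ∈ Icc 0 b) : Tendsto (fun n => F n t) atTop (𝓝 0) := by
  have hbounds := continuousOn_picardMap_iterate_and_mem_Icc hκcont hκmono hκnonneg hc₄ hc₅
    hsmall hF₀ hFsucc
  have hanti : ∀ n, ∀ t ∈ Icc 0 b, F (n + 1) t ≤ F n t := by
    intro n
    induction n with
    | zero => intro t ht; rw [hF₀]; exact ((hbounds 1).2 t ht).2
    | succ n ih =>
      intro t ht
      have hsub : Icc 0 t ⊆ Icc 0 b := Icc_subset_Icc_right ht.2
      calc F (n + 2) t = picardMap κ c₄ (F (n + 1)) t := by rw [hFsucc]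
        _ ≤ picardMap κ c₄ (F n) t :=
          picardMap_le_picardMap hκcont hκmono hc₄ ht.1 ((hbounds (n + 1)).1.mono hsub)
            ((hbounds n).1.mono hsub) fun s hs => ⟨((hbounds _).2 s (hsub hs)).1, ih s (hsub hs)⟩
        _ = F (n + 1) t := by rw [hFsucc]
  have hlim : ∀ t ∈ Icc 0 b, Tendsto (fun n => F n t) atTop (𝓝 (⨅ n, F n t)) := fun t ht =>
    tendsto_atTop_ciInf (antitone_nat_of_succ_le fun n => hanti n t ht)
      ⟨0, by rintro _ ⟨n, rfl⟩; exact ((hbounds n).2 t ht).1⟩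
  have hlim₀ : ∀ t ∈ Icc 0 b, 0 ≤ ⨅ n, F n t := fun t ht =>
    ge_of_tendsto' (hlim t ht) fun n => ((hbounds n).2 t ht).1
  have hbound : ∀ n, ∀ s ∈ Icc 0 b, ‖κ (F n s)‖ ≤ κ (c₅ * b) := by
    intro n s hs
    obtain ⟨hFs₀, hFs⟩ := (hbounds n).2 s hs
    rw [Real.norm_of_nonneg (hκnonneg _ hFs₀)]
    exact hκmono hFs₀ (mul_nonneg hc₅ (hs.1.trans hs.2))
      (hFs.trans (mul_le_mul_of_nonneg_left hs.2 hc₅))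
  obtain ⟨hcont, heq⟩ := continuousOn_and_eqOn_picardMap_of_tendsto hκcont (fun n => (hbounds n).1)
    (fun n s hs => ((hbounds n).2 s hs).1) hbound hFsucc hlim
  simpa [eqOn_zero_of_eqOn_picardMap hκcont hκpos hκdiv hcont hlim₀ heq ht] using hlim t ht

theorem majorant_sequence_tendsto_zero_general
    (κ : ℝ → ℝ)
    (hκcont : ContinuousOn κ (Ici 0))
    (hκmono : MonotoneOn κ (Ici 0))
    (hκnonneg : ∀ r : ℝ, 0 ≤ r → 0 ≤ κ r)
    (hκpos : ∀ r : ℝ, 0 < r → 0 < κ r)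
    (hκdiv : ∀ ε : ℝ, 0 < ε →
      Tendsto (fun s : ℝ => ∫ x in s..ε, 1 / κ x) (nhdsWithin 0 (Ioi 0)) atTop)
    (c₄ c₅ b₁ : ℝ) (hc₄ : 0 < c₄) (hc₅ : 0 < c₅)
    (hsmall : ∀ t ∈ Icc (0 : ℝ) b₁, c₄ * κ (c₅ * t) ≤ c₅)
    (φ : ℕ → ℝ → ℝ)
    (hφ₁ : ∀ t : ℝ, φ 1 t = c₅ * t)
    (hφrec : ∀ n : ℕ, 1 ≤ n → ∀ t : ℝ, φ (n + 1) t = c₄ * ∫ s in (0 : ℝ)..t, κ (φ n s)) :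
    ∀ t ∈ Icc (0 : ℝ) b₁, Tendsto (fun n : ℕ => φ n t) atTop (nhds 0) := by
  intro t ht
  have hφsucc : ∀ n, φ (n + 1 + 1) = picardMap κ c₄ (φ (n + 1)) := fun n =>
    funext (hφrec (n + 1) n.succ_pos)
  exact (tendsto_add_atTop_iff_nat 1).1 <| tendsto_picardMap_iterate_zero hκcont hκmono
    hκnonneg hκpos hκdiv hc₄.le hc₅.le hsmall hφ₁ hφsucc ht

/-- Under the divergence condition `∫₀₊ ds/κ(s) = ∞`, the majorant sequence
`φ₁(t) = c₅ t`, `φ_{n+1}(t) = c₄ ∫₀ᵗ κ(φ_n(s)) ds` from the proof of Theorem 3.2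
tends to `0` pointwise on `[0,b₁]`. -/
theorem majorant_sequence_tendsto_zero
    (κ : ℝ → ℝ)
    (hκcont : ContinuousOn κ (Ici 0))
    (hκconc : ConcaveOn ℝ (Ici 0) κ)
    (hκmono : MonotoneOn κ (Ici 0))
    (hκnonneg : ∀ r : ℝ, 0 ≤ r → 0 ≤ κ r)
    (hκpos : ∀ r : ℝ, 0 < r → 0 < κ r)
    (hκzero : κ 0 = 0)
    (hκdiv : ∀ ε : ℝ, 0 < ε →
      Tendsto (fun s : ℝ => ∫ x in s..ε, 1 / κ x) (nhdsWithin 0 (Ioi 0)) atTop)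
    (c₄ c₅ b₁ : ℝ) (hc₄ : 0 < c₄) (hc₅ : 0 < c₅) (hb₁ : 0 < b₁)
    (hsmall : ∀ t ∈ Icc (0 : ℝ) b₁, c₄ * κ (c₅ * t) ≤ c₅)
    (φ : ℕ → ℝ → ℝ)
    (hφ₁ : ∀ t : ℝ, φ 1 t = c₅ * t)
    (hφrec : ∀ n : ℕ, 1 ≤ n → ∀ t : ℝ, φ (n + 1) t = c₄ * ∫ s in (0 : ℝ)..t, κ (φ n s)) :
    ∀ t ∈ Icc (0 : ℝ) b₁, Tendsto (fun n : ℕ => φ n t) atTop (nhds 0) :=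
  majorant_sequence_tendsto_zero_general κ hκcont hκmono hκnonneg hκpos hκdiv c₄ c₅ b₁ hc₄ hc₅
    hsmall φ hφ₁ hφrec
end
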